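/- arXiv:1810.10248 — 4 statements merged into one kernel-verified Lean document; each statement's English description precedes it below -/
import Mathlib

section
/- The measure ρ_N is invariant under R_N: for every Borel set A ⊆ [0,1], ρ_N(R_N^{−1}(A)) = ρ_N(A); that is, R_N is measure-preserving with respect to ρ_N. -/
/-!
On `[0, 1)` the map `R_N` has the inverse branches `g_k y = 1 - N / (N + k + y)`, `k ∈ ℕ`, whose
images are disjoint. Changing variables on each branch, `ρ_N (R_N⁻¹ A)` becomes the integral over
`A` of `∑ₖ |g_k'| · h ∘ g_k`, where `h x = c / (x + N - 1)` is the density of `ρ_N`. This sum is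
`h` itself: its `k`-th term is `c / (N + k + y - 1) - c / (N + k + y)`, so it telescopes.
-/

open MeasureTheory Set Filter Topology

/-- The Rényi-type continued fraction transformation. -/
noncomputable def RN (N : ℕ) (x : ℝ) : ℝ :=
  if x = 1 then 0 else Int.fract ((N : ℝ) / (1 - x))

/-- The invariant measure ρ_N on the Borel subsets of [0,1]. -/
noncomputable def rhoN (N : ℕ) : MeasureTheory.Measure ℝ :=
  (MeasureTheory.volume.restrict (Set.Icc (0:ℝ) 1)).withDensity
    (fun x => ENNReal.ofReal ((Real.log ((N : ℝ) / ((N : ℝ) - 1)))⁻¹ * (x + N - 1)⁻¹))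

open Function

-- `renyiBranch N k` inverts `RN N` on the cylinder `[1 - N / (N + k), 1 - N / (N + k + 1))`.
noncomputable def renyiBranch (n : ℝ) (k : ℕ) (y : ℝ) : ℝ := 1 - n / (n + k + y)

section RenyiBranch

variable {n : ℝ} {k : ℕ} {y : ℝ}

theorem hasDerivAt_renyiBranch (h : n + k + y ≠ 0) :
    HasDerivAt (renyiBranch n k) (n / (n + k + y) ^ 2) y := by
  have hinv := ((hasDerivAt_id' y).const_add (n + k)).inv h
  refine ((hinv.const_mul n).const_sub 1).congr_deriv ?_
  field_simp

theorem renyiBranch_strictMonoOn (hn : 0 < n) : StrictMonoOn (renyiBranch n k) (Ici 0) := by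
  intro y hy y' hy' hlt
  have hk : (0 : ℝ) ≤ k := k.cast_nonneg
  have := div_lt_div_of_pos_left hn (by linarith [mem_Ici.1 hy])
    (by linarith : n + k + y < n + k + y')
  simp only [renyiBranch]
  linarith

theorem renyiBranch_mem_Ico (hn : 0 < n) (hy : y ∈ Ico (0 : ℝ) 1) :
    renyiBranch n k y ∈ Ico (0 : ℝ) 1 := by
  have hk : (0 : ℝ) ≤ k := k.cast_nonneg
  have hpos : 0 < n / (n + k + y) := div_pos hn (by linarith [hy.1])
  have hle : n / (n + k + y) ≤ 1 := (div_le_one (by linarith [hy.1])).2 (by linarith [hy.1])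
  constructor <;> simp only [renyiBranch] <;> linarith

theorem one_sub_renyiBranch (hn : 0 < n) (hy : 0 ≤ y) :
    n / (1 - renyiBranch n k y) = n + k + y := by
  have : n + k + y ≠ 0 := by positivity
  simp only [renyiBranch, sub_sub_cancel]
  field_simp

theorem RN_renyiBranch {N : ℕ} (hN : 0 < N) (hy : y ∈ Ico (0 : ℝ) 1) :
    RN N (renyiBranch N k y) = y := by
  have hN' : (0 : ℝ) < N := by exact_mod_cast hN
  have hne : renyiBranch N k y ≠ 1 := (renyiBranch_mem_Ico hN' hy).2.ne
  rw [RN, if_neg hne, one_sub_renyiBranch hN' hy.1, add_comm, ← Nat.cast_add,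
    Int.fract_add_natCast, Int.fract_eq_self.2 hy]

theorem RN_mem_Ico (N : ℕ) (x : ℝ) : RN N x ∈ Ico (0 : ℝ) 1 := by
  unfold RN
  split_ifs
  · exact ⟨le_rfl, one_pos⟩
  · exact ⟨Int.fract_nonneg _, Int.fract_lt_one _⟩

theorem exists_renyiBranch_RN_eq {N : ℕ} (hN : 0 < N) {x : ℝ} (hx : x ∈ Ico (0 : ℝ) 1) :
    ∃ k : ℕ, renyiBranch N k (RN N x) = x := by
  have h1x : 0 < 1 - x := by linarith [hx.2]
  set u := (N : ℝ) / (1 - x) with hu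
  have hNu : (N : ℝ) ≤ u := le_div_self N.cast_nonneg h1x (by linarith [hx.1])
  obtain ⟨k, hk⟩ := Int.eq_ofNat_of_zero_le
    (sub_nonneg.2 (Int.le_floor.2 (by exact_mod_cast hNu)) : (0 : ℤ) ≤ ⌊u⌋ - N)
  have hfloor : (N : ℝ) + k = ⌊u⌋ := by exact_mod_cast (by omega : (N : ℤ) + k = ⌊u⌋)
  refine ⟨k, ?_⟩
  rw [RN, if_neg hx.2.ne, renyiBranch, hfloor, Int.floor_add_fract, hu,
    div_div_cancel₀ (by exact_mod_cast hN.ne')]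
  ring

theorem preimage_RN_inter_Ico {N : ℕ} (hN : 0 < N) (A : Set ℝ) :
    RN N ⁻¹' A ∩ Ico 0 1 = ⋃ k : ℕ, renyiBranch N k '' (A ∩ Ico 0 1) := by
  have hN' : (0 : ℝ) < N := by exact_mod_cast hN
  ext x
  simp only [mem_iUnion, mem_image, mem_inter_iff, mem_preimage]
  constructor
  · rintro ⟨hxA, hx⟩
    obtain ⟨k, hk⟩ := exists_renyiBranch_RN_eq hN hx
    exact ⟨k, RN N x, ⟨hxA, RN_mem_Ico N x⟩, hk⟩
  · rintro ⟨k, y, ⟨hyA, hy⟩, rfl⟩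
    exact ⟨by rwa [RN_renyiBranch hN hy], renyiBranch_mem_Ico hN' hy⟩

theorem pairwise_disjoint_image_renyiBranch (hn : 0 < n) {s : Set ℝ}
    (hs : s ⊆ Ico 0 1) : Pairwise (Disjoint on fun k => renyiBranch n k '' s) := by
  intro k l hkl
  refine Set.disjoint_left.2 ?_
  rintro _ ⟨y, hy, rfl⟩ ⟨y', hy', heq⟩
  have h := congrArg (fun x => n / (1 - x)) heq
  simp only [one_sub_renyiBranch hn (hs hy).1, one_sub_renyiBranch hn (hs hy').1] at h
  have h1 : k < l + 1 := by exact_mod_cast (by linarith [(hs hy).1, (hs hy').2] : (k : ℝ) < l + 1)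
  have h2 : l < k + 1 := by exact_mod_cast (by linarith [(hs hy).2, (hs hy').1] : (l : ℝ) < k + 1)
  omega

end RenyiBranch

theorem Antitone.hasSum_sub_succ {f : ℕ → ℝ} {l : ℝ} (hf : Antitone f)
    (hl : Tendsto f atTop (𝓝 l)) : HasSum (fun k => f k - f (k + 1)) (f 0 - l) := by
  rw [hasSum_iff_tendsto_nat_of_nonneg (fun k => sub_nonneg.2 (hf k.le_succ))]
  simpa only [Finset.sum_range_sub'] using tendsto_const_nhds.sub hl

theorem hasSum_renyi_transfer {n y : ℝ} (hn : 1 < n) (hy : 0 ≤ y) :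
    HasSum (fun k : ℕ => n / (n + k + y) ^ 2 * (renyiBranch n k y + n - 1)⁻¹)
      (y + n - 1)⁻¹ := by
  set f : ℕ → ℝ := fun k => (n + k + y - 1)⁻¹
  have hpos : ∀ k : ℕ, 0 < n + k + y - 1 := fun k => by linarith [k.cast_nonneg (α := ℝ)]
  have hterm : ∀ k : ℕ,
      n / (n + k + y) ^ 2 * (renyiBranch n k y + n - 1)⁻¹ = f k - f (k + 1) := by
    intro k
    have ha : 0 < n + k + y - 1 := hpos k
    have hn0 : n ≠ 0 := by positivity
    have hb : renyiBranch n k y + n - 1 = n * (n + k + y - 1) / (n + k + y) := by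
      simp only [renyiBranch]
      field_simp
      ring
    have hsucc : n + ((k + 1 : ℕ) : ℝ) + y - 1 = n + k + y := by push_cast; ring
    simp only [hb, f, hsucc]
    field_simp
    ring
  have hanti : Antitone f := fun i j hij =>
    inv_anti₀ (hpos i) (by gcongr)
  have hlim : Tendsto f atTop (𝓝 0) := tendsto_inv_atTop_zero.comp <|
    tendsto_atTop_mono (fun k => by linarith : ∀ k : ℕ, (k : ℝ) ≤ n + k + y - 1)
      tendsto_natCast_atTop_atTop
  simp only [hterm]
  convert hanti.hasSum_sub_succ hlim using 1
  simp only [f, Nat.cast_zero, add_zero, sub_zero]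
  ring

theorem tsum_ofReal_renyi_transfer {n c y : ℝ} (hn : 1 < n) (hc : 0 ≤ c)
    (hy : y ∈ Ico (0 : ℝ) 1) :
    ∑' k : ℕ, ENNReal.ofReal |n / (n + k + y) ^ 2| *
        ENNReal.ofReal (c * (renyiBranch n k y + n - 1)⁻¹) =
      ENNReal.ofReal (c * (y + n - 1)⁻¹) := by
  have hn0 : 0 < n := by linarith
  have hderiv_nonneg : ∀ k : ℕ, 0 ≤ n / (n + k + y) ^ 2 :=
    fun k => div_nonneg hn0.le (sq_nonneg _)
  have hdensity_nonneg : ∀ k : ℕ, 0 ≤ (renyiBranch n k y + n - 1)⁻¹ :=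
    fun k => inv_nonneg.2 (by linarith [(renyiBranch_mem_Ico (k := k) hn0 hy).1])
  have hsum := (hasSum_renyi_transfer hn hy.1).mul_left c
  simp_rw [← ENNReal.ofReal_mul (abs_nonneg _), abs_of_nonneg (hderiv_nonneg _),
    mul_left_comm _ c]
  rw [← ENNReal.ofReal_tsum_of_nonneg
    (fun k => mul_nonneg hc (mul_nonneg (hderiv_nonneg k) (hdensity_nonneg k))) hsum.summable,
    hsum.tsum_eq]

theorem lintegral_iUnion_image {ι : Type*} [Countable ι] {s : Set ℝ} {g g' : ι → ℝ → ℝ}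
    (hs : MeasurableSet s) (hg : ∀ i, ∀ x ∈ s, HasDerivWithinAt (g i) (g' i x) s x)
    (hinj : ∀ i, InjOn (g i) s) (hdisj : Pairwise (Disjoint on fun i => g i '' s))
    {f : ℝ → ENNReal} (hf : Measurable f) :
    ∫⁻ x in ⋃ i, g i '' s, f x = ∫⁻ y in s, ∑' i, ENNReal.ofReal |g' i y| * f (g i y) := by
  have hmeas : ∀ i, MeasurableSet (g i '' s) := fun i =>
    measurable_image_of_fderivWithin hs (fun x hx => (hg i x hx).hasFDerivWithinAt) (hinj i)
  rw [lintegral_iUnion hmeas hdisj, lintegral_tsum]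
  · congr 1 with i
    exact lintegral_image_eq_lintegral_abs_deriv_mul hs (hg i) (hinj i) f
  intro i
  have hg'm : AEMeasurable (g' i) (volume.restrict s) := by
    convert (ContinuousLinearMap.apply ℝ ℝ (1 : ℝ)).measurable.comp_aemeasurable
      (aemeasurable_fderivWithin volume hs fun x hx => (hg i x hx).hasFDerivWithinAt) using 1
    funext x
    simp
  have hgm : AEMeasurable (g i) (volume.restrict s) :=
    (ContinuousOn.aemeasurable (fun x hx => (hg i x hx).continuousWithinAt) hs)
  exact (ENNReal.measurable_ofReal.comp_aemeasurable hg'm.abs).mul (hf.comp_aemeasurable hgm)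

theorem rhoN_apply_eq_setLIntegral_Ico (N : ℕ) (B : Set ℝ) :
    rhoN N B = ∫⁻ x in B ∩ Ico 0 1,
      ENNReal.ofReal ((Real.log ((N : ℝ) / ((N : ℝ) - 1)))⁻¹ * (x + N - 1)⁻¹) := by
  rw [rhoN, withDensity_apply', Measure.restrict_restrict' measurableSet_Icc]
  exact setLIntegral_congr (ae_eq_refl B |>.inter Ico_ae_eq_Icc.symm)

theorem stmt2_general (N : ℕ) (hN : 2 ≤ N) (A : Set ℝ)
    (hA : MeasurableSet A) :
    rhoN N (RN N ⁻¹' A) = rhoN N A := by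
  have hn : (1 : ℝ) < N := by exact_mod_cast hN
  set c := (Real.log ((N : ℝ) / ((N : ℝ) - 1)))⁻¹
  have hc : 0 ≤ c :=
    inv_nonneg.2 (Real.log_nonneg ((le_div_iff₀ (by linarith)).2 (by linarith)))
  have hA' : MeasurableSet (A ∩ Ico 0 1) := hA.inter measurableSet_Ico
  have hderiv : ∀ (k : ℕ), ∀ y ∈ A ∩ Ico 0 1, HasDerivWithinAt (renyiBranch N k)
      (N / (N + k + y) ^ 2) (A ∩ Ico 0 1) y := fun k y hy =>
    (hasDerivAt_renyiBranch (by linarith [hy.2.1, k.cast_nonneg (α := ℝ)])).hasDerivWithinAt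
  have hinj : ∀ k : ℕ, InjOn (renyiBranch N k) (A ∩ Ico 0 1) := fun k =>
    (renyiBranch_strictMonoOn (by linarith)).injOn.mono fun y hy => hy.2.1
  have hdensity : Measurable fun x : ℝ => ENNReal.ofReal (c * (x + N - 1)⁻¹) := by
    fun_prop
  rw [rhoN_apply_eq_setLIntegral_Ico, rhoN_apply_eq_setLIntegral_Ico,
    preimage_RN_inter_Ico (by omega), lintegral_iUnion_image hA' hderiv hinj
      (pairwise_disjoint_image_renyiBranch (by linarith) inter_subset_right) hdensity]
  exact setLIntegral_congr_fun hA' fun y hy => tsum_ofReal_renyi_transfer hn hc hy.2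

theorem stmt2 (N : ℕ) (hN : 2 ≤ N) (A : Set ℝ)
    (hA : MeasurableSet A) (hA' : A ⊆ Set.Icc (0:ℝ) 1) :
    rhoN N (RN N ⁻¹' A) = rhoN N A :=
  stmt2_general N hN A hA
end

section
/- For every real-valued f ∈ C¹([0,1]), the function Uf is differentiable on [0,1] and (Uf)′(x) = −V(f′)(x) for all x ∈ [0,1]. -/
/-!
Extend `f` to a `C¹` function `g` on `ℝ` by its tangent lines at `0` and `1`. Every branch
`u_{N,i}` maps `[0,1]` into itself, so `U g = U f` on `[0,1]` and `V g' = V f'` there. On the open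
neighbourhood `(-1/2, 2)` of `[0,1]` the termwise derivatives
`P_{N,i}' · g(u_{N,i}) + P_{N,i} · u_{N,i}' · g'(u_{N,i})` are `O(1/i²)` uniformly, so `U g` can be
differentiated term by term. Finally `P_{N,i}' = c_{i-1} - c_i` with `c_i = (i+1-N)/(x+i)²`, so Abel
summation turns `∑ P_{N,i}' · g(u_{N,i})` into `∑ c_i · (g(u_{N,i+1}) - g(u_{N,i})) = ∑ c_i ∫ g'`,
the integral part of `-V g'`; the boundary terms `c_{i-1} g(u_{N,i})` are `O(1/i)`.
-/

open MeasureTheory Set Filter Topology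

/-- The kernel P_{N,i}(x) = (x+N-1)/((x+i)(x+i-1)). -/
noncomputable def PNi (N i : ℕ) (x : ℝ) : ℝ :=
  (x + N - 1) / ((x + i) * (x + i - 1))

/-- The inverse branches u_{N,i}(x) = 1 - N/(x+i). -/
noncomputable def uNi (N i : ℕ) (x : ℝ) : ℝ := 1 - (N : ℝ) / (x + i)

/-- The Perron–Frobenius operator U of R_N under ρ_N:
`U f(x) = Σ_{i ≥ N} P_{N,i}(x) f(u_{N,i}(x))`, indexed by i = N + k. -/
noncomputable def U (N : ℕ) (f : ℝ → ℝ) (x : ℝ) : ℝ :=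
  ∑' k : ℕ, PNi N (N + k) x * f (uNi N (N + k) x)

/-- The operator V with (Uf)' = -V f':
`V g(x) = -Σ_{i ≥ N} [ (i+1-N)/(x+i)² ∫_{u_{N,i}(x)}^{u_{N,i+1}(x)} g
          + N(x+N-1)/((x+i-1)(x+i)³) g(u_{N,i}(x)) ]`, indexed by i = N + k. -/
noncomputable def V (N : ℕ) (g : ℝ → ℝ) (x : ℝ) : ℝ :=
  -∑' k : ℕ,
    ((((N + k : ℕ) : ℝ) + 1 - N) / (x + ((N + k : ℕ) : ℝ)) ^ 2
        * (∫ u in (uNi N (N + k) x)..(uNi N (N + k + 1) x), g u)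
      + ((N : ℝ) * (x + N - 1)) / ((x + ((N + k : ℕ) : ℝ) - 1) * (x + ((N + k : ℕ) : ℝ)) ^ 3)
        * g (uNi N (N + k) x))

section TangentExtension

variable {a b : ℝ} {f f' : ℝ → ℝ}

noncomputable def tangentExtend (a b : ℝ) (f f' : ℝ → ℝ) (y : ℝ) : ℝ :=
  f (max a (min b y)) + f' (max a (min b y)) * (y - max a (min b y))

lemma tangentExtend_eq {y : ℝ} (hy : y ∈ Icc a b) : tangentExtend a b f f' y = f y := by
  simp [tangentExtend, hy.1, hy.2]

lemma hasDerivAt_tangentExtend (hab : a ≤ b)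
    (hf : ∀ x ∈ Icc a b, HasDerivWithinAt f (f' x) (Icc a b) x) (y : ℝ) :
    HasDerivAt (tangentExtend a b f f') (f' (max a (min b y))) y := by
  set F := tangentExtend a b f f'
  have piece : ∀ s : Set ℝ, IsClosed s →
      (∀ z ∈ s, HasDerivWithinAt F (f' (max a (min b z))) s z) →
      HasDerivWithinAt F (f' (max a (min b y))) s y := fun s hs h => by
    by_cases hy : y ∈ s
    · exact h y hy
    · exact HasFDerivWithinAt.of_notMem_closure (hs.closure_eq.symm ▸ hy)
  have left : HasDerivWithinAt F (f' (max a (min b y))) (Iic a) y := by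
    refine piece _ isClosed_Iic fun z hz => ?_
    have hline : ∀ w ∈ Iic a, F w = f a + f' a * (w - a) := fun w hw => by
      simp [F, tangentExtend, hw.out, hw.out.trans hab]
    simpa [hz.out, hz.out.trans hab] using
      (((hasDerivAt_id z).sub_const a).const_mul (f' a)).const_add (f a)
        |>.hasDerivWithinAt.congr hline (hline z hz)
  have mid : HasDerivWithinAt F (f' (max a (min b y))) (Icc a b) y := by
    refine piece _ isClosed_Icc fun z hz => ?_
    simpa [hz.1, hz.2] using
      (hf z hz).congr (fun w hw => tangentExtend_eq hw) (tangentExtend_eq hz)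
  have right : HasDerivWithinAt F (f' (max a (min b y))) (Ici b) y := by
    refine piece _ isClosed_Ici fun z hz => ?_
    have hline : ∀ w ∈ Ici b, F w = f b + f' b * (w - b) := fun w hw => by
      simp [F, tangentExtend, hw.out, hab]
    simpa [hz.out, hab.trans hz.out, hab] using
      (((hasDerivAt_id z).sub_const b).const_mul (f' b)).const_add (f b)
        |>.hasDerivWithinAt.congr hline (hline z hz)
  have hcover : Iic a ∪ Icc a b ∪ Ici b = univ := by
    rw [Iic_union_Icc_eq_Iic hab, Iic_union_Ici]
  simpa [hcover] using (left.union mid).union right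

lemma exists_hasDerivAt_extension (hab : a ≤ b)
    (hf : ∀ x ∈ Icc a b, HasDerivWithinAt f (f' x) (Icc a b) x) (hf' : ContinuousOn f' (Icc a b)) :
    ∃ g g' : ℝ → ℝ, (∀ y, HasDerivAt g (g' y) y) ∧ Continuous g' ∧
      EqOn f g (Icc a b) ∧ EqOn f' g' (Icc a b) := by
  refine ⟨tangentExtend a b f f', fun y => f' (max a (min b y)),
    hasDerivAt_tangentExtend hab hf, ?_, fun y hy => (tangentExtend_eq hy).symm,
    fun y hy => by simp [hy.1, hy.2]⟩
  exact hf'.comp_continuous (by fun_prop) fun y => ⟨le_max_left _ _, max_le hab (min_le_left _ _)⟩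

end TangentExtension

section Branches

variable {N i : ℕ} {x : ℝ}

noncomputable def coeffV (N i : ℕ) (x : ℝ) : ℝ := ((i : ℝ) + 1 - N) / (x + i) ^ 2

noncomputable def derivPNi (N i : ℕ) (x : ℝ) : ℝ := ((i : ℝ) - N) / (x + i - 1) ^ 2 - coeffV N i x

lemma hasDerivAt_uNi (hx : x + i ≠ 0) : HasDerivAt (uNi N i) (N / (x + i) ^ 2) x := by
  have hA : HasDerivAt (fun y : ℝ => y + i) 1 x := (hasDerivAt_id' x).add_const _
  refine (((hasDerivAt_const x (N : ℝ)).fun_div hA hx).const_sub 1).congr_deriv ?_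
  ring

lemma hasDerivAt_PNi (hx0 : x + i ≠ 0) (hx1 : x + i - 1 ≠ 0) :
    HasDerivAt (PNi N i) (derivPNi N i x) x := by
  have hA : HasDerivAt (fun y : ℝ => y + i) 1 x := (hasDerivAt_id' x).add_const _
  have hm : HasDerivAt (fun y : ℝ => y + N - 1) 1 x := ((hasDerivAt_id' x).add_const _).sub_const _
  refine (hm.fun_div (hA.fun_mul (hA.sub_const 1)) (mul_ne_zero hx0 hx1)).congr_deriv ?_
  rw [derivPNi, coeffV]
  field_simp
  ring

lemma PNi_mul_deriv_uNi :
    PNi N i x * (N / (x + i) ^ 2) = N * (x + N - 1) / ((x + i - 1) * (x + i) ^ 3) := by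
  rw [PNi, div_mul_div_comm]
  ring

end Branches

lemma tsum_eq_tsum_of_sub_eq_sub_succ {G : Type*} [AddCommGroup G] [TopologicalSpace G]
    [IsTopologicalAddGroup G] [T2Space G] {s t e : ℕ → G} (hs : Summable s) (ht : Summable t)
    (hst : ∀ k, s k - t k = e k - e (k + 1)) (he0 : e 0 = 0) (he : Tendsto e atTop (𝓝 0)) :
    ∑' k, s k = ∑' k, t k := by
  rw [← sub_eq_zero, ← hs.tsum_sub ht]
  have h := (hs.sub ht).hasSum.tendsto_sum_nat
  have hpartial : ∀ n, ∑ k ∈ Finset.range n, (s k - t k) = -e n := fun n => by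
    rw [Finset.sum_congr rfl fun k _ => hst k, Finset.sum_range_sub', he0, zero_sub]
  simp only [hpartial] at h
  simpa using tendsto_nhds_unique h he.neg

lemma summable_div_succ_sq (C : ℝ) : Summable fun k : ℕ => C / ((k : ℝ) + 1) ^ 2 := by
  have h := ((summable_nat_add_iff 1).mpr (Real.summable_one_div_nat_pow.mpr one_lt_two)).mul_left C
  exact h.congr fun k => by push_cast; ring

section Bounds

variable {N : ℕ} {y : ℝ}

lemma add_half_lt_add_natCast_sub_one (hN : 2 ≤ N) (k : ℕ) (hy : -1/2 < y) :
    (k : ℝ) + 1 / 2 < y + ((N + k : ℕ) : ℝ) - 1 := by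
  have : (2 : ℝ) ≤ N := by exact_mod_cast hN
  push_cast
  linarith

lemma one_div_add_natCast_sub_one_sq_le (hN : 2 ≤ N) (k : ℕ) (hy : -1/2 < y) :
    1 / (y + ((N + k : ℕ) : ℝ) - 1) ^ 2 ≤ 4 / ((k : ℝ) + 1) ^ 2 := by
  have h := add_half_lt_add_natCast_sub_one hN k hy
  rw [div_le_div_iff₀ (by nlinarith) (by positivity)]
  nlinarith

lemma abs_PNi_le (hN : 2 ≤ N) (k : ℕ) (hy : y ∈ Ioo (-1/2 : ℝ) 2) :
    |PNi N (N + k) y| ≤ 4 * (N + 1) / ((k : ℝ) + 1) ^ 2 := by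
  have hA := add_half_lt_add_natCast_sub_one hN k hy.1
  have : (2 : ℝ) ≤ N := by exact_mod_cast hN
  set A := y + ((N + k : ℕ) : ℝ)
  have hm : 0 < y + N - 1 := by linarith [hy.1]
  calc |PNi N (N + k) y| = (y + N - 1) / (A * (A - 1)) :=
        abs_of_pos (div_pos hm (by nlinarith))
    _ ≤ (N + 1) / (A - 1) ^ 2 :=
        div_le_div₀ (by positivity) (by linarith [hy.2]) (by nlinarith) (by nlinarith)
    _ = (N + 1) * (1 / (A - 1) ^ 2) := by ring
    _ ≤ (N + 1) * (4 / ((k : ℝ) + 1) ^ 2) :=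
        mul_le_mul_of_nonneg_left (one_div_add_natCast_sub_one_sq_le hN k hy.1) (by positivity)
    _ = 4 * (N + 1) / ((k : ℝ) + 1) ^ 2 := by ring

lemma abs_derivPNi_le (hN : 2 ≤ N) (k : ℕ) (hy : -1/2 < y) :
    |derivPNi N (N + k) y| ≤ 4 / ((k : ℝ) + 1) ^ 2 := by
  have hA := add_half_lt_add_natCast_sub_one hN k hy
  have hNk : ((N + k : ℕ) : ℝ) = N + k := by push_cast; ring
  have hk' : ((N + k : ℕ) : ℝ) - N = k := by rw [hNk]; ring
  have hk'' : ((N + k : ℕ) : ℝ) + 1 - N = k + 1 := by rw [hNk]; ring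
  set A := y + ((N + k : ℕ) : ℝ)
  have hA0 : A ≠ 0 := by nlinarith
  have hA1 : A - 1 ≠ 0 := by nlinarith
  -- each of the two terms is of order `1/k`; over the common denominator they cancel to `1/k²`
  have hdiff : (k : ℝ) / (A - 1) ^ 2 - (k + 1) / A ^ 2
      = (k * (k + 1) - (A - k - 1) ^ 2) / ((A - 1) ^ 2 * A ^ 2) := by
    field_simp
    ring
  calc _ = |(k * (k + 1) - (A - k - 1) ^ 2)| / ((A - 1) ^ 2 * A ^ 2) := by
        rw [derivPNi, coeffV, hk', hk'', hdiff, abs_div,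
          abs_of_pos (a := (A - 1) ^ 2 * A ^ 2) (by positivity)]
    _ ≤ A ^ 2 / ((A - 1) ^ 2 * A ^ 2) := by
        gcongr
        rw [abs_le]
        constructor <;> nlinarith
    _ = 1 / (A - 1) ^ 2 := by field_simp
    _ ≤ 4 / ((k : ℝ) + 1) ^ 2 := one_div_add_natCast_sub_one_sq_le hN k hy

lemma uNi_mem_Icc_neg_one_one (hN : 2 ≤ N) (k : ℕ) (hy : -1/2 < y) :
    uNi N (N + k) y ∈ Icc (-1 : ℝ) 1 := by
  have hA := add_half_lt_add_natCast_sub_one hN k hy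
  have : (2 : ℝ) ≤ N := by exact_mod_cast hN
  have hA0 : 0 < y + ((N + k : ℕ) : ℝ) := by linarith
  have hle : (N : ℝ) / (y + ((N + k : ℕ) : ℝ)) ≤ 2 := by
    rw [div_le_iff₀ hA0]
    push_cast at hA ⊢
    linarith
  have hnn : (0 : ℝ) ≤ N / (y + ((N + k : ℕ) : ℝ)) := by positivity
  rw [uNi]
  constructor <;> linarith

lemma deriv_uNi_le (hN : 2 ≤ N) (k : ℕ) (hy : -1/2 < y) :
    (N : ℝ) / (y + ((N + k : ℕ) : ℝ)) ^ 2 ≤ N := by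
  have hA := add_half_lt_add_natCast_sub_one hN k hy
  exact div_le_self (by positivity) (by nlinarith)

lemma abs_uNi_succ_sub_le (hN : 2 ≤ N) (k : ℕ) (hy : -1/2 < y) :
    |uNi N (N + k + 1) y - uNi N (N + k) y| ≤ 4 * N / ((k : ℝ) + 1) ^ 2 := by
  have hA := add_half_lt_add_natCast_sub_one hN k hy
  have hsub : uNi N (N + k + 1) y - uNi N (N + k) y
      = N / ((y + ((N + k : ℕ) : ℝ)) * (y + ((N + k : ℕ) : ℝ) + 1)) := by
    have h0 : y + ((N + k : ℕ) : ℝ) ≠ 0 := by linarith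
    have h1 : y + ((N + k : ℕ) : ℝ) + 1 ≠ 0 := by linarith
    rw [uNi, uNi, Nat.cast_succ, ← add_assoc]
    field_simp
    ring
  rw [hsub, abs_of_nonneg (by apply div_nonneg <;> nlinarith)]
  calc _ ≤ (N : ℝ) / (y + ((N + k : ℕ) : ℝ) - 1) ^ 2 :=
        div_le_div_of_nonneg_left (by positivity) (by nlinarith) (by nlinarith)
    _ = N * (1 / (y + ((N + k : ℕ) : ℝ) - 1) ^ 2) := by ring
    _ ≤ N * (4 / ((k : ℝ) + 1) ^ 2) :=
        mul_le_mul_of_nonneg_left (one_div_add_natCast_sub_one_sq_le hN k hy) (by positivity)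
    _ = 4 * N / ((k : ℝ) + 1) ^ 2 := by ring

lemma abs_coeffV_le_one (hN : 2 ≤ N) (k : ℕ) (hy : -1/2 < y) : |coeffV N (N + k) y| ≤ 1 := by
  have hA := add_half_lt_add_natCast_sub_one hN k hy
  have hNk : ((N + k : ℕ) : ℝ) + 1 - N = k + 1 := by push_cast; ring
  rw [coeffV, hNk, abs_of_nonneg (by positivity), div_le_one (by nlinarith)]
  nlinarith

lemma abs_natCast_sub_div_sub_one_sq_le (hN : 2 ≤ N) (k : ℕ) (hy : -1/2 < y) :
    |(((N + k : ℕ) : ℝ) - N) / (y + ((N + k : ℕ) : ℝ) - 1) ^ 2| ≤ 1 / ((k : ℝ) + 1) := by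
  have hA := add_half_lt_add_natCast_sub_one hN k hy
  have hNk : ((N + k : ℕ) : ℝ) - N = k := by push_cast; ring
  rw [hNk, abs_of_nonneg (by positivity), div_le_div_iff₀ (by nlinarith) (by positivity)]
  nlinarith

end Bounds

section Series

variable {N : ℕ} {g g' : ℝ → ℝ} {Mg Mg' x : ℝ}

noncomputable def termDeriv (N : ℕ) (g g' : ℝ → ℝ) (k : ℕ) (y : ℝ) : ℝ :=
  derivPNi N (N + k) y * g (uNi N (N + k) y)
    + PNi N (N + k) y * (N / (y + ((N + k : ℕ) : ℝ)) ^ 2) * g' (uNi N (N + k) y)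

lemma hasDerivAt_PNi_mul_comp_uNi (hN : 2 ≤ N) (hg : ∀ y, HasDerivAt g (g' y) y) (k : ℕ)
    (hx : -1/2 < x) :
    HasDerivAt (fun y => PNi N (N + k) y * g (uNi N (N + k) y)) (termDeriv N g g' k x) x := by
  have hA := add_half_lt_add_natCast_sub_one hN k hx
  have hu := hasDerivAt_uNi (N := N) (show x + ((N + k : ℕ) : ℝ) ≠ 0 by linarith)
  have hP := hasDerivAt_PNi (N := N) (show x + ((N + k : ℕ) : ℝ) ≠ 0 by linarith)
    (show x + ((N + k : ℕ) : ℝ) - 1 ≠ 0 by linarith)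
  exact (hP.mul ((hg _).comp x hu)).congr_deriv (by rw [termDeriv, Function.comp_apply]; ring)

lemma abs_termDeriv_le (hN : 2 ≤ N) (hMg : ∀ u ∈ Icc (-1 : ℝ) 1, |g u| ≤ Mg)
    (hMg' : ∀ u ∈ Icc (-1 : ℝ) 1, |g' u| ≤ Mg') (k : ℕ) (hx : x ∈ Ioo (-1/2 : ℝ) 2) :
    |termDeriv N g g' k x| ≤ (4 * Mg + 4 * (N + 1) * N * Mg') / ((k : ℝ) + 1) ^ 2 := by
  have hu := uNi_mem_Icc_neg_one_one hN k hx.1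
  have hMg'0 : 0 ≤ Mg' := (abs_nonneg _).trans (hMg' _ hu)
  calc |termDeriv N g g' k x|
      ≤ |derivPNi N (N + k) x| * |g (uNi N (N + k) x)|
        + |PNi N (N + k) x| * (N / (x + ((N + k : ℕ) : ℝ)) ^ 2) * |g' (uNi N (N + k) x)| := by
        refine (abs_add_le _ _).trans_eq ?_
        rw [abs_mul, abs_mul, abs_mul, abs_of_nonneg (a := (N : ℝ) / _) (by positivity)]
    _ ≤ 4 / ((k : ℝ) + 1) ^ 2 * Mg + 4 * (N + 1) / ((k : ℝ) + 1) ^ 2 * N * Mg' := by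
        gcongr ?_ * ?_ + ?_ * ?_ * ?_
        exacts [abs_derivPNi_le hN k hx.1, hMg _ hu, abs_PNi_le hN k hx,
          deriv_uNi_le hN k hx.1, hMg' _ hu]
    _ = (4 * Mg + 4 * (N + 1) * N * Mg') / ((k : ℝ) + 1) ^ 2 := by ring

lemma hasDerivAt_U_eq_tsum (hN : 2 ≤ N) (hg : ∀ y, HasDerivAt g (g' y) y)
    (hMg : ∀ u ∈ Icc (-1 : ℝ) 1, |g u| ≤ Mg) (hMg' : ∀ u ∈ Icc (-1 : ℝ) 1, |g' u| ≤ Mg')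
    (hx : x ∈ Ioo (-1/2 : ℝ) 2) :
    HasDerivAt (U N g) (∑' k, termDeriv N g g' k x) x := by
  have h0 : (0 : ℝ) ∈ Ioo (-1/2 : ℝ) 2 := by norm_num
  have hsum0 : Summable fun k => PNi N (N + k) 0 * g (uNi N (N + k) 0) := by
    refine .of_norm_bounded (summable_div_succ_sq (4 * (N + 1) * Mg)) fun k => ?_
    rw [Real.norm_eq_abs, abs_mul, mul_div_right_comm]
    exact mul_le_mul (abs_PNi_le hN k h0) (hMg _ (uNi_mem_Icc_neg_one_one hN k h0.1))
      (abs_nonneg _) (by positivity)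
  exact hasDerivAt_tsum_of_isPreconnected (summable_div_succ_sq _) isOpen_Ioo isPreconnected_Ioo
    (fun k y hy => hasDerivAt_PNi_mul_comp_uNi hN hg k hy.1)
    (fun k y hy => abs_termDeriv_le hN hMg hMg' k hy)
    h0 hsum0 hx

lemma summable_derivPNi_mul (hN : 2 ≤ N) (hMg : ∀ u ∈ Icc (-1 : ℝ) 1, |g u| ≤ Mg)
    (hx : -1/2 < x) : Summable fun k => derivPNi N (N + k) x * g (uNi N (N + k) x) := by
  refine .of_norm_bounded (summable_div_succ_sq (4 * Mg)) fun k => ?_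
  rw [Real.norm_eq_abs, abs_mul, mul_div_right_comm]
  exact mul_le_mul (abs_derivPNi_le hN k hx) (hMg _ (uNi_mem_Icc_neg_one_one hN k hx))
    (abs_nonneg _) (by positivity)

lemma summable_PNi_mul_deriv_uNi_mul (hN : 2 ≤ N) (hMg' : ∀ u ∈ Icc (-1 : ℝ) 1, |g' u| ≤ Mg')
    (hx : x ∈ Ioo (-1/2 : ℝ) 2) :
    Summable fun k =>
      PNi N (N + k) x * (N / (x + ((N + k : ℕ) : ℝ)) ^ 2) * g' (uNi N (N + k) x) := by
  have hMg'0 : 0 ≤ Mg' := (abs_nonneg _).trans (hMg' 0 (by norm_num))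
  refine .of_norm_bounded (summable_div_succ_sq (4 * (N + 1) * N * Mg')) fun k => ?_
  rw [Real.norm_eq_abs, abs_mul, abs_mul, abs_of_nonneg (a := (N : ℝ) / _) (by positivity)]
  calc _ ≤ 4 * (N + 1) / ((k : ℝ) + 1) ^ 2 * N * Mg' := by
        gcongr
        exacts [abs_PNi_le hN k hx, deriv_uNi_le hN k hx.1,
          hMg' _ (uNi_mem_Icc_neg_one_one hN k hx.1)]
    _ = _ := by ring

lemma summable_coeffV_mul_integral (hN : 2 ≤ N) (hMg' : ∀ u ∈ Icc (-1 : ℝ) 1, |g' u| ≤ Mg')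
    (hx : -1/2 < x) :
    Summable fun k : ℕ =>
      coeffV N (N + k) x * ∫ u in (uNi N (N + k) x)..(uNi N (N + k + 1) x), g' u := by
  have hMg'0 : 0 ≤ Mg' := (abs_nonneg _).trans (hMg' 0 (by norm_num))
  have hu k := uNi_mem_Icc_neg_one_one hN k hx
  refine .of_norm_bounded (summable_div_succ_sq (Mg' * (4 * N))) fun k => ?_
  have hint : ‖∫ u in (uNi N (N + k) x)..(uNi N (N + k + 1) x), g' u‖
      ≤ Mg' * |uNi N (N + k + 1) x - uNi N (N + k) x| :=
    intervalIntegral.norm_integral_le_of_norm_le_const fun u hu' =>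
      hMg' u (uIcc_subset_Icc (hu k) (hu (k + 1)) (uIoc_subset_uIcc hu'))
  calc _ = |coeffV N (N + k) x| * ‖∫ u in (uNi N (N + k) x)..(uNi N (N + k + 1) x), g' u‖ := by
        rw [norm_mul, Real.norm_eq_abs]
    _ ≤ 1 * (Mg' * (4 * N / ((k : ℝ) + 1) ^ 2)) :=
        mul_le_mul (abs_coeffV_le_one hN k hx) (hint.trans (mul_le_mul_of_nonneg_left
          (abs_uNi_succ_sub_le hN k hx) hMg'0)) (norm_nonneg _) zero_le_one
    _ = Mg' * (4 * N) / ((k : ℝ) + 1) ^ 2 := by ring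

lemma tsum_derivPNi_mul_eq_tsum_coeffV_mul_integral (hN : 2 ≤ N) (hg : ∀ y, HasDerivAt g (g' y) y)
    (hg' : Continuous g') (hMg : ∀ u ∈ Icc (-1 : ℝ) 1, |g u| ≤ Mg)
    (hMg' : ∀ u ∈ Icc (-1 : ℝ) 1, |g' u| ≤ Mg') (hx : -1/2 < x) :
    ∑' k : ℕ, derivPNi N (N + k) x * g (uNi N (N + k) x)
      = ∑' k : ℕ, coeffV N (N + k) x * ∫ u in (uNi N (N + k) x)..(uNi N (N + k + 1) x), g' u := by
  -- Abel summation; the boundary term `e k` is `c_{N+k-1} · g(u_{N,N+k})`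
  refine tsum_eq_tsum_of_sub_eq_sub_succ (summable_derivPNi_mul hN hMg hx)
    (summable_coeffV_mul_integral hN hMg' hx)
    (e := fun k => (((N + k : ℕ) : ℝ) - N) / (x + ((N + k : ℕ) : ℝ) - 1) ^ 2 * g (uNi N (N + k) x))
    (fun k => ?_) (by simp) ?_
  · rw [intervalIntegral.integral_eq_sub_of_hasDerivAt (fun y _ => hg y)
      (hg'.intervalIntegrable _ _)]
    have hshift : (((N + (k + 1) : ℕ) : ℝ) - N) / (x + ((N + (k + 1) : ℕ) : ℝ) - 1) ^ 2
        = coeffV N (N + k) x := by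
      rw [coeffV]
      push_cast
      ring_nf
    rw [hshift, ← add_assoc, derivPNi]
    ring
  · have hMg0 : 0 ≤ Mg := (abs_nonneg _).trans (hMg 0 (by norm_num))
    refine squeeze_zero_norm (a := fun k : ℕ => Mg * (1 / ((k : ℝ) + 1))) (fun k => ?_) ?_
    · rw [Real.norm_eq_abs, abs_mul, mul_comm Mg]
      exact mul_le_mul (abs_natCast_sub_div_sub_one_sq_le hN k hx)
        (hMg _ (uNi_mem_Icc_neg_one_one hN k hx)) (abs_nonneg _) (by positivity)
    · simpa using tendsto_one_div_add_atTop_nhds_zero_nat.const_mul Mg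

lemma tsum_termDeriv_eq_neg_V (hN : 2 ≤ N) (hg : ∀ y, HasDerivAt g (g' y) y)
    (hg' : Continuous g') (hMg : ∀ u ∈ Icc (-1 : ℝ) 1, |g u| ≤ Mg)
    (hMg' : ∀ u ∈ Icc (-1 : ℝ) 1, |g' u| ≤ Mg') (hx : x ∈ Ioo (-1/2 : ℝ) 2) :
    ∑' k, termDeriv N g g' k x = -V N g' x := by
  have hR := summable_PNi_mul_deriv_uNi_mul hN hMg' hx
  simp only [termDeriv]
  rw [V, neg_neg, (summable_derivPNi_mul hN hMg hx.1).tsum_add hR,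
    tsum_derivPNi_mul_eq_tsum_coeffV_mul_integral hN hg hg' hMg hMg' hx.1,
    ← (summable_coeffV_mul_integral hN hMg' hx.1).tsum_add hR]
  simp only [PNi_mul_deriv_uNi, coeffV]

theorem hasDerivAt_U (hN : 2 ≤ N) (hg : ∀ y, HasDerivAt g (g' y) y) (hg' : Continuous g')
    (hx : x ∈ Ioo (-1/2 : ℝ) 2) : HasDerivAt (U N g) (-V N g' x) x := by
  obtain ⟨Mg, hMg⟩ := (isCompact_Icc (a := (-1 : ℝ)) (b := 1)).exists_bound_of_continuousOn
    (continuous_iff_continuousAt.2 fun y => (hg y).continuousAt).continuousOn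
  obtain ⟨Mg', hMg'⟩ :=
    (isCompact_Icc (a := (-1 : ℝ)) (b := 1)).exists_bound_of_continuousOn hg'.continuousOn
  simp only [Real.norm_eq_abs] at hMg hMg'
  rw [← tsum_termDeriv_eq_neg_V hN hg hg' hMg hMg' hx]
  exact hasDerivAt_U_eq_tsum hN hg hMg hMg' hx

end Series

section Congr

variable {N : ℕ} {f g : ℝ → ℝ} {x : ℝ}

lemma uNi_mem_Icc_zero_one {i : ℕ} (hx : 0 ≤ x) (hi : N ≤ i) : uNi N i x ∈ Icc (0 : ℝ) 1 := by
  have hNi : (N : ℝ) ≤ x + i := by linarith [show (N : ℝ) ≤ i by exact_mod_cast hi]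
  have hnn : (0 : ℝ) ≤ N / (x + i) := by positivity
  rw [uNi]
  constructor
  · linarith [div_le_one_of_le₀ hNi (by positivity)]
  · linarith

lemma U_congr (hfg : EqOn f g (Icc 0 1)) (hx : 0 ≤ x) : U N f x = U N g x :=
  tsum_congr fun k => by rw [hfg (uNi_mem_Icc_zero_one hx (Nat.le_add_right N k))]

lemma V_congr (hfg : EqOn f g (Icc 0 1)) (hx : 0 ≤ x) : V N f x = V N g x := by
  have hu : ∀ k, uNi N (N + k) x ∈ Icc (0 : ℝ) 1 := fun k =>
    uNi_mem_Icc_zero_one hx (Nat.le_add_right N k)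
  rw [V, V]
  congr 1
  refine tsum_congr fun k => ?_
  have hu' : uNi N (N + k + 1) x ∈ Icc (0 : ℝ) 1 := hu (k + 1)
  rw [intervalIntegral.integral_congr (hfg.mono (uIcc_subset_Icc (hu k) hu')), hfg (hu k)]

end Congr

theorem stmt8 (N : ℕ) (hN : 2 ≤ N) (f f' : ℝ → ℝ)
    (hderiv : ∀ x ∈ Set.Icc (0:ℝ) 1, HasDerivWithinAt f (f' x) (Set.Icc (0:ℝ) 1) x)
    (hcont : ContinuousOn f' (Set.Icc (0:ℝ) 1)) :
    ∀ x ∈ Set.Icc (0:ℝ) 1,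
      HasDerivWithinAt (U N f) (-(V N f' x)) (Set.Icc (0:ℝ) 1) x := by
  intro x hx
  obtain ⟨g, g', hg, hg', hfg, hfg'⟩ := exists_hasDerivAt_extension zero_le_one hderiv hcont
  have hU : EqOn (U N f) (U N g) (Icc 0 1) := fun y hy => U_congr hfg hy.1
  rw [V_congr hfg' hx.1]
  exact (hasDerivAt_U hN hg hg' ⟨by linarith [hx.1], by linarith [hx.2]⟩).hasDerivWithinAt.congr
    hU (hU hx)
end

section
/- Let h : [0,∞) → ℝ be continuous and bounded, and define g : (0,1] → ℝ by g(u) = (N/(1−u)) h(Nu/(1−u)) − (N/(1−u) − 1) h(Nu/(1−u) + 1). Then for every x > 0, the partial sums Σ_{i=N}^{M} P_{N,i}(x) g(u_{N,i}(x)) converge as M → ∞, and their limit equals h(x); in other words, U g = h on (0,∞). -/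
open MeasureTheory Set Filter Topology

/-!
At u = u_{N,i}(x) one has N/(1-u) = x+i and Nu/(1-u) = x+i-N, so
P_{N,i}(x) g(u_{N,i}(x)) telescopes: with i = N + k it equals a_k - a_{k+1}, where
a_k = (x+N-1) h(x+k)/(x+N+k-1). Hence the M-th partial sum is a_0 - a_M = h x - a_M,
and a_M → 0 because h is bounded.
-/

section Branches

variable {N i : ℕ} {x : ℝ}

lemma uNi_mem_Ioc (hi : (N : ℝ) < x + i) : uNi N i x ∈ Ioc 0 1 := by
  have hpos : 0 < x + i := (Nat.cast_nonneg N).trans_lt hi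
  refine ⟨?_, ?_⟩
  · have : (N : ℝ) / (x + i) < 1 := (div_lt_one hpos).2 hi
    unfold uNi; linarith
  · have : 0 ≤ (N : ℝ) / (x + i) := by positivity
    unfold uNi; linarith

lemma div_one_sub_uNi (hN : N ≠ 0) (hi : x + i ≠ 0) : (N : ℝ) / (1 - uNi N i x) = x + i := by
  have : (N : ℝ) ≠ 0 := Nat.cast_ne_zero.2 hN
  simp only [uNi, sub_sub_cancel]
  field_simp

lemma mul_uNi_div_one_sub_uNi (hN : N ≠ 0) (hi : x + i ≠ 0) :
    (N : ℝ) * uNi N i x / (1 - uNi N i x) = x + i - N := by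
  rw [mul_div_right_comm, div_one_sub_uNi hN hi, uNi]
  field_simp

end Branches

lemma PNi_mul_sub_eq (N i : ℕ) {x : ℝ} (hi : x + i ≠ 0) (hi' : x + i - 1 ≠ 0) (a b : ℝ) :
    PNi N i x * ((x + i) * a - (x + i - 1) * b) = (x + N - 1) * (a / (x + i - 1) - b / (x + i)) := by
  unfold PNi
  field_simp

section Telescope

variable {N : ℕ} {h g : ℝ → ℝ} {x : ℝ}

lemma sum_range_PNi_mul_eq (hN : 1 ≤ N) (hx : 0 < x)
    (hg : ∀ u ∈ Ioc (0:ℝ) 1,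
      g u = (N : ℝ) / (1 - u) * h ((N : ℝ) * u / (1 - u))
        - ((N : ℝ) / (1 - u) - 1) * h ((N : ℝ) * u / (1 - u) + 1)) (M : ℕ) :
    ∑ k ∈ Finset.range M, PNi N (N + k) x * g (uNi N (N + k) x)
      = h x - (x + N - 1) * h (x + M) / (x + N + M - 1) := by
  have hN' : (1 : ℝ) ≤ N := by exact_mod_cast hN
  set a : ℕ → ℝ := fun k => (x + N - 1) * h (x + k) / (x + N + k - 1)
  have hstep : ∀ k : ℕ, PNi N (N + k) x * g (uNi N (N + k) x) = a k - a (k + 1) := by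
    intro k
    have hk : (0 : ℝ) ≤ k := Nat.cast_nonneg k
    have hi : x + ((N + k : ℕ) : ℝ) = x + N + k := by push_cast; ring
    have hpos : 0 < x + ((N + k : ℕ) : ℝ) - 1 := by rw [hi]; linarith
    rw [hg _ (uNi_mem_Ioc (by rw [hi]; linarith)), div_one_sub_uNi (by omega) (by linarith),
      mul_uNi_div_one_sub_uNi (by omega) (by linarith),
      PNi_mul_sub_eq N _ (by linarith) hpos.ne', hi]
    simp only [a, Nat.cast_add, Nat.cast_one]
    ring_nf
  have ha0 : a 0 = h x := by
    simp only [a, Nat.cast_zero, add_zero]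
    exact mul_div_cancel_left₀ _ (by linarith)
  rw [Finset.sum_congr rfl fun k _ => hstep k, Finset.sum_range_sub', ha0]

lemma tendsto_mul_bounded_div_atTop_zero (hx : 0 ≤ x)
    (hbdd : ∃ C : ℝ, ∀ y ∈ Ici (0:ℝ), |h y| ≤ C) :
    Tendsto (fun M : ℕ => (x + N - 1) * h (x + M) / (x + N + M - 1)) atTop (𝓝 0) := by
  obtain ⟨C, hC⟩ := hbdd
  have hden : Tendsto (fun M : ℕ => x + N + M - 1) atTop atTop :=
    tendsto_atTop_add_const_right _ _ (tendsto_atTop_add_const_left _ _ tendsto_natCast_atTop_atTop)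
  have hcoef : Tendsto (fun M : ℕ => (x + N - 1) / (x + N + M - 1)) atTop (𝓝 0) :=
    tendsto_const_nhds.div_atTop hden
  have hbound : IsBoundedUnder (· ≤ ·) atTop (fun M : ℕ => ‖h (x + M)‖) :=
    isBoundedUnder_of ⟨C, fun M => hC _ (by simp only [mem_Ici]; positivity)⟩
  simpa only [mul_div_right_comm] using hcoef.zero_mul_isBoundedUnder_le hbound

end Telescope

theorem stmt11_general (N : ℕ) (hN : 2 ≤ N) (h : ℝ → ℝ)
    (hbdd : ∃ M : ℝ, ∀ x ∈ Set.Ici (0:ℝ), |h x| ≤ M)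
    (g : ℝ → ℝ)
    (hg : ∀ u ∈ Set.Ioc (0:ℝ) 1,
      g u = (N : ℝ) / (1 - u) * h ((N : ℝ) * u / (1 - u))
        - ((N : ℝ) / (1 - u) - 1) * h ((N : ℝ) * u / (1 - u) + 1)) :
    ∀ x : ℝ, 0 < x →
      Filter.Tendsto
        (fun M : ℕ => ∑ k ∈ Finset.range M, PNi N (N + k) x * g (uNi N (N + k) x))
        Filter.atTop (nhds (h x)) := by
  intro x hx
  have hN1 : 1 ≤ N := by omega
  simp only [sum_range_PNi_mul_eq hN1 hx hg]
  simpa using tendsto_const_nhds.sub (tendsto_mul_bounded_div_atTop_zero hx.le hbdd)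

theorem stmt11 (N : ℕ) (hN : 2 ≤ N) (h : ℝ → ℝ)
    (hcont : ContinuousOn h (Set.Ici (0:ℝ)))
    (hbdd : ∃ M : ℝ, ∀ x ∈ Set.Ici (0:ℝ), |h x| ≤ M)
    (g : ℝ → ℝ)
    (hg : ∀ u ∈ Set.Ioc (0:ℝ) 1,
      g u = (N : ℝ) / (1 - u) * h ((N : ℝ) * u / (1 - u))
        - ((N : ℝ) / (1 - u) - 1) * h ((N : ℝ) * u / (1 - u) + 1)) :
    ∀ x : ℝ, 0 < x →
      Filter.Tendsto
        (fun M : ℕ => ∑ k ∈ Finset.range M, PNi N (N + k) x * g (uNi N (N + k) x))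
        Filter.atTop (nhds (h x)) :=
  stmt11_general N hN h hbdd g hg
end

section
/- Fix real parameters e > 0 and t ∈ [0,1]. Then the endpoint values of the ratio φ_{N,t}/Vφ_{N,t} satisfy (φ_{N,t}/Vφ_{N,t})(1) = −2(e+t+1)²/(e²N), and the equality (φ_{N,t}/Vφ_{N,t})(0) = (φ_{N,t}/Vφ_{N,t})(1) holds if and only if H_N(t) = 0, where H_N(t) = 2(t+e+1)⁴ + e³N²(1−2N)(t+1) − e⁴N³. -/
open MeasureTheory Set Filter Topology

/-- The function φ_{N,t} from the paper (derivative of g_{N,t}). -/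
noncomputable def phiNt (N : ℕ) (e t : ℝ) (x : ℝ) : ℝ :=
  -((N : ℝ) * (e * N - t - 1)) / (e * N * x + (t + 1) * (1 - x)) ^ 2
    - ((N : ℝ) * (2 * e - (e * N - t - 1))) / (e * ((N : ℝ) * x + 1 - x) + (t + 1) * (1 - x)) ^ 2

/-!
Put `p = eN − t − 1`, `c_k = x + N + k` and `E_k = e(x+k) + t + 1`. Since `p = e c_k − E_k`, the
two affine denominators of `φ_{N,t}` at `u_{N,N+k}(x) = 1 − N/c_k` are `N E_k / c_k` and
`N E_{k+1} / c_k`, so both the integral of `φ_{N,t}` over `[u_{N,N+k}(x), u_{N,N+k+1}(x)]` and its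
value at `u_{N,N+k}(x)` are explicit, and the `k`-th summand of `Vφ_{N,t}(x)` turns out to be
`T_{k+1} − T_k` with `T_k = e/E_k² − e²k/((c_k − 1) E_k² E_{k+1}) ∈ [0, e/E_k²]`. The series
therefore telescopes to `−T_0`, giving `Vφ_{N,t}(x) = e/(ex+t+1)²`; the two ratios are then rational
functions of `e`, `t`, `N`.
-/

theorem affine_pos_of_mem_uIcc {α β a b y : ℝ} (ha : 0 < α * a + β) (hb : 0 < α * b + β)
    (hy : y ∈ uIcc a b) : 0 < α * y + β := by
  rcases mem_uIcc.1 hy with ⟨h₁, h₂⟩ | ⟨h₁, h₂⟩ <;> rcases le_total 0 α with hα | hα <;>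
    nlinarith

theorem intervalIntegrable_one_div_affine_sq {α β a b : ℝ} (ha : 0 < α * a + β)
    (hb : 0 < α * b + β) : IntervalIntegrable (fun y => 1 / (α * y + β) ^ 2) volume a b :=
  ContinuousOn.intervalIntegrable <| continuousOn_const.div (by fun_prop) fun _ hy =>
    pow_ne_zero 2 (affine_pos_of_mem_uIcc ha hb hy).ne'

theorem integral_one_div_affine_sq {α β a b : ℝ} (ha : 0 < α * a + β) (hb : 0 < α * b + β) :
    ∫ y in a..b, 1 / (α * y + β) ^ 2 = (b - a) / ((α * a + β) * (α * b + β)) := by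
  have hderiv : ∀ y ∈ uIcc a b, HasDerivAt (fun y => (y - a) / ((α * a + β) * (α * y + β)))
      (1 / (α * y + β) ^ 2) y := by
    intro y hy
    have hy := (affine_pos_of_mem_uIcc ha hb hy).ne'
    refine (((hasDerivAt_id' y).sub_const a).div
      ((((hasDerivAt_id' y).const_mul α).add_const β).const_mul (α * a + β))
      (mul_ne_zero ha.ne' hy)).congr_deriv ?_
    field_simp
    ring
  rw [intervalIntegral.integral_eq_sub_of_hasDerivAt hderiv
    (intervalIntegrable_one_div_affine_sq ha hb)]
  simp

theorem hasSum_succ_sub_of_tendsto_zero {G : Type*} [AddCommGroup G] [TopologicalSpace G]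
    [IsTopologicalAddGroup G] [T2Space G] {T : ℕ → G}
    (hs : Summable fun k => T (k + 1) - T k) (hT : Tendsto T atTop (𝓝 0)) :
    HasSum (fun k => T (k + 1) - T k) (-T 0) := by
  rw [hs.hasSum_iff_tendsto_nat]
  simp_rw [Finset.sum_range_sub]
  simpa using hT.sub_const (T 0)

theorem summable_of_le_const_div_sq {a : ℕ → ℝ} (C : ℝ) (h₀ : ∀ k, 0 ≤ a k)
    (h : ∀ k, a k ≤ C / ((k : ℝ) + 1) ^ 2) : Summable a := by
  refine Summable.of_nonneg_of_le h₀ h ?_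
  have := (summable_nat_add_iff 1).2 (Real.summable_one_div_nat_pow.2 one_lt_two)
  simpa [div_eq_mul_one_div C] using this.mul_left C

noncomputable def phiDen (e t x : ℝ) (k : ℕ) : ℝ := e * (x + k) + t + 1

noncomputable def Vterm (N : ℕ) (g : ℝ → ℝ) (x : ℝ) (k : ℕ) : ℝ :=
  (((N + k : ℕ) : ℝ) + 1 - N) / (x + ((N + k : ℕ) : ℝ)) ^ 2
      * (∫ u in (uNi N (N + k) x)..(uNi N (N + k + 1) x), g u)
    + ((N : ℝ) * (x + N - 1)) / ((x + ((N + k : ℕ) : ℝ) - 1) * (x + ((N + k : ℕ) : ℝ)) ^ 3)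
      * g (uNi N (N + k) x)

theorem V_eq_neg_tsum_Vterm (N : ℕ) (g : ℝ → ℝ) (x : ℝ) : V N g x = -∑' k, Vterm N g x k :=
  rfl

noncomputable def telescopingTerm (N : ℕ) (e t x : ℝ) (k : ℕ) : ℝ :=
  e / phiDen e t x k ^ 2 - e ^ 2 * k / ((x + N + k - 1) * phiDen e t x k ^ 2 * phiDen e t x (k + 1))

section

variable {N : ℕ} {e t x : ℝ}

theorem phiDen_succ (k : ℕ) : phiDen e t x (k + 1) = phiDen e t x k + e := by
  unfold phiDen; push_cast; ring

theorem le_phiDen (he : 0 ≤ e) (hx : 0 ≤ x) (k : ℕ) : e * k + (t + 1) ≤ phiDen e t x k := by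
  unfold phiDen; nlinarith

theorem phiDen_pos (he : 0 ≤ e) (ht : 0 < t + 1) (hx : 0 ≤ x) (k : ℕ) : 0 < phiDen e t x k := by
  linarith [le_phiDen (t := t) he hx k, mul_nonneg he k.cast_nonneg]

theorem phiNt_eq (y : ℝ) : phiNt N e t y =
    -(N * (e * N - t - 1)) / ((e * N - t - 1) * y + (t + 1)) ^ 2
      - N * (2 * e - (e * N - t - 1)) / ((e * N - t - 1 - e) * y + (t + 1 + e)) ^ 2 := by
  unfold phiNt; ring_nf

theorem uNi_add (k : ℕ) : uNi N (N + k) x = 1 - N / (x + N + k) := by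
  unfold uNi; push_cast; ring_nf

theorem affine_uNi_eq (k : ℕ) (hc : x + N + k ≠ 0) :
    (e * N - t - 1) * uNi N (N + k) x + (t + 1) = N * phiDen e t x k / (x + N + k) ∧
      (e * N - t - 1 - e) * uNi N (N + k) x + (t + 1 + e)
        = N * phiDen e t x (k + 1) / (x + N + k) := by
  rw [uNi_add, phiDen_succ]
  unfold phiDen
  constructor <;> field_simp <;> ring

theorem phiNt_uNi (hN : N ≠ 0) (k : ℕ) (hc : x + N + k ≠ 0) :
    phiNt N e t (uNi N (N + k) x) = -(x + N + k) ^ 2 / N *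
      ((e * N - t - 1) / phiDen e t x k ^ 2
        + (2 * e - (e * N - t - 1)) / phiDen e t x (k + 1) ^ 2) := by
  obtain ⟨h₁, h₂⟩ := affine_uNi_eq (e := e) (t := t) k hc
  rw [phiNt_eq, h₁, h₂]
  field_simp
  ring

theorem integral_phiNt_uNi (hN : 0 < N) (he : 0 ≤ e) (ht : 0 < t + 1) (hx : 0 ≤ x) (k : ℕ) :
    ∫ u in (uNi N (N + k) x)..(uNi N (N + k + 1) x), phiNt N e t u
      = -(e * N - t - 1) / (phiDen e t x k * phiDen e t x (k + 1))
        - (2 * e - (e * N - t - 1)) / (phiDen e t x (k + 1) * phiDen e t x (k + 1 + 1)) := by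
  have hc : ∀ j : ℕ, 0 < x + N + j := fun j => by positivity
  obtain ⟨h₁, h₂⟩ := affine_uNi_eq (e := e) (t := t) k (hc k).ne'
  obtain ⟨h₃, h₄⟩ := affine_uNi_eq (e := e) (t := t) (k + 1) (hc (k + 1)).ne'
  rw [← Nat.add_assoc] at h₃ h₄
  have hE := phiDen_pos he ht hx
  have hp₁ : 0 < (e * N - t - 1) * uNi N (N + k) x + (t + 1) := by
    rw [h₁]; have := hE k; positivity
  have hp₂ : 0 < (e * N - t - 1 - e) * uNi N (N + k) x + (t + 1 + e) := by
    rw [h₂]; have := hE (k + 1); positivity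
  have hp₃ : 0 < (e * N - t - 1) * uNi N (N + k + 1) x + (t + 1) := by
    rw [h₃]; have := hE (k + 1); have := hc (k + 1); positivity
  have hp₄ : 0 < (e * N - t - 1 - e) * uNi N (N + k + 1) x + (t + 1 + e) := by
    rw [h₄]; have := hE (k + 1 + 1); have := hc (k + 1); positivity
  have hφ : ∀ u, phiNt N e t u
      = -(N * (e * N - t - 1)) * (1 / ((e * N - t - 1) * u + (t + 1)) ^ 2)
        + -(N * (2 * e - (e * N - t - 1))) * (1 / ((e * N - t - 1 - e) * u + (t + 1 + e)) ^ 2) := by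
    intro u; rw [phiNt_eq]; ring
  have hlen : uNi N (N + k + 1) x - uNi N (N + k) x = N / ((x + N + k) * (x + N + k + 1)) := by
    rw [Nat.add_assoc, uNi_add, uNi_add]
    have := hc k; have := hc (k + 1)
    push_cast
    field_simp
    ring
  simp_rw [hφ]
  rw [intervalIntegral.integral_add
      ((intervalIntegrable_one_div_affine_sq hp₁ hp₃).const_mul _)
      ((intervalIntegrable_one_div_affine_sq hp₂ hp₄).const_mul _),
    intervalIntegral.integral_const_mul, intervalIntegral.integral_const_mul,
    integral_one_div_affine_sq hp₁ hp₃, integral_one_div_affine_sq hp₂ hp₄, h₁, h₂, h₃, h₄, hlen]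
  have := hE k; have := hE (k + 1); have := hE (k + 1 + 1); have := hc k; have := hc (k + 1)
  push_cast
  field_simp
  ring

theorem Vterm_phiNt_eq (hN : 2 ≤ N) (he : 0 ≤ e) (ht : 0 < t + 1) (hx : 0 ≤ x) (k : ℕ) :
    Vterm N (phiNt N e t) x k =
      -(e * N - t - 1) * ((k + 1) / ((x + N + k) ^ 2 * (phiDen e t x k * phiDen e t x (k + 1))))
      + -(2 * e - (e * N - t - 1))
        * ((k + 1) / ((x + N + k) ^ 2 * (phiDen e t x (k + 1) * phiDen e t x (k + 1 + 1))))
      + -((x + N - 1) * (e * N - t - 1))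
        * (1 / ((x + N + k - 1) * (x + N + k) * phiDen e t x k ^ 2))
      + -((x + N - 1) * (2 * e - (e * N - t - 1)))
        * (1 / ((x + N + k - 1) * (x + N + k) * phiDen e t x (k + 1) ^ 2)) := by
  have hN' : (2 : ℝ) ≤ N := by exact_mod_cast hN
  have hc : 0 < x + N + k := by positivity
  have hc₁ : 0 < x + N + k - 1 := by linarith [k.cast_nonneg (α := ℝ)]
  have hE₀ := phiDen_pos he ht hx k
  have hE₁ := phiDen_pos he ht hx (k + 1)
  have hE₂ := phiDen_pos he ht hx (k + 1 + 1)
  unfold Vterm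
  rw [integral_phiNt_uNi (by omega) he ht hx, phiNt_uNi (by omega) k hc.ne']
  push_cast
  rw [show (N : ℝ) + k + 1 - N = k + 1 by ring, show x + ((N : ℝ) + k) = x + N + k by ring]
  generalize phiDen e t x k = A at *
  generalize phiDen e t x (k + 1) = B at *
  generalize phiDen e t x (k + 1 + 1) = C at *
  generalize x + N + k = c at *
  field_simp
  ring

theorem Vterm_phiNt_eq_sub (hN : 2 ≤ N) (he : 0 ≤ e) (ht : 0 < t + 1) (hx : 0 ≤ x) (k : ℕ) :
    Vterm N (phiNt N e t) x k = telescopingTerm N e t x (k + 1) - telescopingTerm N e t x k := by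
  have hN' : (2 : ℝ) ≤ N := by exact_mod_cast hN
  have hc : 0 < x + N + k := by positivity
  have hc₁ : 0 < x + N + k - 1 := by linarith [k.cast_nonneg (α := ℝ)]
  have hp : e * N - t - 1 = e * (x + N + k) - phiDen e t x k := by unfold phiDen; ring
  have hE₀ := phiDen_pos he ht hx k
  have hE₁ := phiDen_pos he ht hx (k + 1)
  have hE₂ := phiDen_pos he ht hx (k + 1 + 1)
  rw [Vterm_phiNt_eq hN he ht hx, telescopingTerm, telescopingTerm, hp]
  rw [phiDen_succ (k + 1), phiDen_succ k] at *
  push_cast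
  rw [show x + N + ((k : ℝ) + 1) - 1 = x + N + k by ring,
    show x + (N : ℝ) - 1 = x + N + k - k - 1 by ring]
  generalize phiDen e t x k = A at *
  generalize x + N + k = c at *
  field_simp
  ring

theorem summable_succ_div_sq_mul_phiDen (hN : 1 ≤ N) (he : 0 < e) (ht : 0 < t + 1) (hx : 0 ≤ x)
    (i : ℕ) : Summable fun k : ℕ =>
      ((k : ℝ) + 1) / ((x + N + k) ^ 2 * (phiDen e t x (k + i) * phiDen e t x (k + i + 1))) := by
  have hN' : (1 : ℝ) ≤ N := by exact_mod_cast hN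
  refine summable_of_le_const_div_sq (1 / (e * (t + 1))) (fun k => ?_) fun k => ?_
  · have := phiDen_pos he.le ht hx (k + i); have := phiDen_pos he.le ht hx (k + i + 1)
    positivity
  · have h₁ : t + 1 ≤ phiDen e t x (k + i) := by
      linarith [le_phiDen (t := t) he.le hx (k + i), mul_nonneg he.le (k + i).cast_nonneg]
    have h₂ : e * (k + 1) ≤ phiDen e t x (k + i + 1) := by
      have := le_phiDen (t := t) he.le hx (k + i + 1)
      push_cast at this
      nlinarith [i.cast_nonneg (α := ℝ)]
    have hc : (k : ℝ) + 1 ≤ x + N + k := by linarith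
    have := phiDen_pos he.le ht hx (k + i)
    calc ((k : ℝ) + 1) / ((x + N + k) ^ 2 * (phiDen e t x (k + i) * phiDen e t x (k + i + 1)))
        ≤ ((k : ℝ) + 1) / ((k + 1) ^ 2 * ((t + 1) * (e * (k + 1)))) := by
          gcongr ((k : ℝ) + 1) / (?_ ^ 2 * (?_ * ?_))
      _ = 1 / (e * (t + 1)) / ((k : ℝ) + 1) ^ 2 := by field_simp

theorem summable_one_div_mul_phiDen_sq (hN : 2 ≤ N) (he : 0 ≤ e) (ht : 0 < t + 1) (hx : 0 ≤ x)
    (i : ℕ) : Summable fun k : ℕ =>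
      1 / ((x + N + k - 1) * (x + N + k) * phiDen e t x (k + i) ^ 2) := by
  have hN' : (2 : ℝ) ≤ N := by exact_mod_cast hN
  have hc₁ : ∀ k : ℕ, (k : ℝ) + 1 ≤ x + N + k - 1 := fun k => by linarith
  refine summable_of_le_const_div_sq (1 / (t + 1) ^ 2) (fun k => ?_) fun k => ?_
  · have := phiDen_pos he ht hx (k + i)
    have : (0 : ℝ) < x + N + k - 1 := by linarith [hc₁ k, k.cast_nonneg (α := ℝ)]
    positivity
  · have h₁ : t + 1 ≤ phiDen e t x (k + i) := by
      linarith [le_phiDen (t := t) he hx (k + i), mul_nonneg he (k + i).cast_nonneg]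
    have hc₁ := hc₁ k
    have hc : (k : ℝ) + 1 ≤ x + N + k := by linarith
    have : (0 : ℝ) < x + N + k - 1 := by linarith [k.cast_nonneg (α := ℝ)]
    calc 1 / ((x + N + k - 1) * (x + N + k) * phiDen e t x (k + i) ^ 2)
        ≤ 1 / (((k : ℝ) + 1) * (k + 1) * (t + 1) ^ 2) := by
          gcongr 1 / (?_ * ?_ * ?_ ^ 2)
      _ = 1 / (t + 1) ^ 2 / ((k : ℝ) + 1) ^ 2 := by field_simp

theorem summable_Vterm_phiNt (hN : 2 ≤ N) (he : 0 < e) (ht : 0 < t + 1) (hx : 0 ≤ x) :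
    Summable (Vterm N (phiNt N e t) x) := by
  rw [funext (Vterm_phiNt_eq hN he.le ht hx)]
  have ha₀ := summable_succ_div_sq_mul_phiDen (N := N) (by omega) he ht hx 0
  have hb₀ := summable_one_div_mul_phiDen_sq hN he.le ht hx 0
  simp only [add_zero] at ha₀ hb₀
  exact (((ha₀.mul_left _).add
    ((summable_succ_div_sq_mul_phiDen (by omega) he ht hx 1).mul_left _)).add
    (hb₀.mul_left _)).add ((summable_one_div_mul_phiDen_sq hN he.le ht hx 1).mul_left _)

theorem telescopingTerm_nonneg_and_le (hN : 2 ≤ N) (he : 0 ≤ e) (ht : 0 < t + 1) (hx : 0 ≤ x)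
    (k : ℕ) : 0 ≤ telescopingTerm N e t x k ∧
      telescopingTerm N e t x k ≤ e / phiDen e t x k ^ 2 := by
  have hN' : (2 : ℝ) ≤ N := by exact_mod_cast hN
  have hc₁ : 1 ≤ x + N + k - 1 := by linarith [k.cast_nonneg (α := ℝ)]
  have hE := phiDen_pos he ht hx k
  have hE' := phiDen_pos he ht hx (k + 1)
  have hek : e * k ≤ (x + N + k - 1) * phiDen e t x (k + 1) :=
    calc e * k ≤ phiDen e t x (k + 1) := by
          have := le_phiDen (t := t) he hx (k + 1)
          push_cast at this
          nlinarith
      _ ≤ (x + N + k - 1) * phiDen e t x (k + 1) := le_mul_of_one_le_left hE'.le hc₁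
  have hr₀ : 0 ≤ e * k / ((x + N + k - 1) * phiDen e t x (k + 1)) := by
    have : (0 : ℝ) < x + N + k - 1 := by linarith
    positivity
  have hr₁ : e * k / ((x + N + k - 1) * phiDen e t x (k + 1)) ≤ 1 :=
    (div_le_one (by nlinarith)).2 hek
  have hT : telescopingTerm N e t x k
      = e / phiDen e t x k ^ 2 * (1 - e * k / ((x + N + k - 1) * phiDen e t x (k + 1))) := by
    have : (0 : ℝ) < x + N + k - 1 := by linarith
    unfold telescopingTerm
    field_simp
  rw [hT]
  exact ⟨mul_nonneg (by positivity) (by linarith),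
    mul_le_of_le_one_right (by positivity) (by linarith)⟩

theorem tendsto_telescopingTerm (hN : 2 ≤ N) (he : 0 < e) (ht : 0 < t + 1) (hx : 0 ≤ x) :
    Tendsto (telescopingTerm N e t x) atTop (𝓝 0) := by
  have hE : Tendsto (phiDen e t x) atTop atTop :=
    tendsto_atTop_add_const_right _ _ <| tendsto_atTop_add_const_right _ _ <|
      (tendsto_atTop_add_const_left _ _ tendsto_natCast_atTop_atTop).const_mul_atTop he
  exact squeeze_zero (fun k => (telescopingTerm_nonneg_and_le hN he.le ht hx k).1)
    (fun k => (telescopingTerm_nonneg_and_le hN he.le ht hx k).2)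
    (tendsto_const_nhds.div_atTop ((tendsto_pow_atTop two_ne_zero).comp hE))

theorem V_phiNt (hN : 2 ≤ N) (he : 0 < e) (ht : 0 < t + 1) (hx : 0 ≤ x) :
    V N (phiNt N e t) x = e / (e * x + t + 1) ^ 2 := by
  have hs := summable_Vterm_phiNt hN he ht hx
  rw [funext (Vterm_phiNt_eq_sub hN he.le ht hx)] at hs
  rw [V_eq_neg_tsum_Vterm, funext (Vterm_phiNt_eq_sub hN he.le ht hx),
    (hasSum_succ_sub_of_tendsto_zero hs (tendsto_telescopingTerm hN he ht hx)).tsum_eq, neg_neg]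
  simp [telescopingTerm, phiDen]

end

theorem stmt15 (N : ℕ) (hN : 2 ≤ N) (e t : ℝ) (he : 0 < e) (ht : t ∈ Set.Icc (0:ℝ) 1) :
    phiNt N e t 1 / V N (phiNt N e t) 1 = -2 * (e + t + 1) ^ 2 / (e ^ 2 * N) ∧
    (phiNt N e t 0 / V N (phiNt N e t) 0 = phiNt N e t 1 / V N (phiNt N e t) 1 ↔
      2 * (t + e + 1) ^ 4 + e ^ 3 * (N : ℝ) ^ 2 * (1 - 2 * N) * (t + 1)
        - e ^ 4 * (N : ℝ) ^ 3 = 0) := by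
  have hN₀ : (0 : ℝ) < N := by positivity
  have ht₁ : 0 < t + 1 := by linarith [ht.1]
  have hs : 0 < e + t + 1 := by linarith
  have hratio₁ : phiNt N e t 1 / V N (phiNt N e t) 1 = -2 * (e + t + 1) ^ 2 / (e ^ 2 * N) := by
    rw [V_phiNt hN he ht₁ zero_le_one]
    unfold phiNt
    field_simp
    ring
  refine ⟨hratio₁, ?_⟩
  have hgap : phiNt N e t 0 / V N (phiNt N e t) 0 - phiNt N e t 1 / V N (phiNt N e t) 1
      = (2 * (t + e + 1) ^ 4 + e ^ 3 * (N : ℝ) ^ 2 * (1 - 2 * N) * (t + 1) - e ^ 4 * (N : ℝ) ^ 3)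
        / (e ^ 2 * N * (e + t + 1) ^ 2) := by
    rw [hratio₁, V_phiNt hN he ht₁ le_rfl, phiNt_eq]
    have : 0 < t + 1 + e := by linarith
    simp only [mul_zero, zero_add]
    field_simp
    ring
  rw [← sub_eq_zero, hgap, div_eq_zero_iff, or_iff_left (by positivity)]
end
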